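/- There is no infinite path of body transitions (→bo) in the entry/body-labeled 1-LTS L̂1(StExp^(*)(A)); that is, the relation →bo on stacked star expressions is terminating. -/

import Mathlib

universe u v w

/-- Star expressions over a set `A` of actions. -/
inductive StExp (A : Type u) : Type u
  | zero : StExp A
  | one : StExp A
  | act : A → StExp A
  | add : StExp A → StExp A → StExp A
  | mul : StExp A → StExp A → StExp A
  | star : StExp A → StExp A

namespace StExp

variable {A : Type u}

/-- Immediate termination in Milner's TSS `T(A)`. -/
inductive Term : StExp A → Prop
  | one : Term StExp.one
  | addL {e₁ e₂ : StExp A} : Term e₁ → Term (StExp.add e₁ e₂)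
  | addR {e₁ e₂ : StExp A} : Term e₂ → Term (StExp.add e₁ e₂)
  | mul {e₁ e₂ : StExp A} : Term e₁ → Term e₂ → Term (StExp.mul e₁ e₂)
  | star {e : StExp A} : Term (StExp.star e)

/-- Transitions in Milner's TSS `T(A)`. -/
inductive Step : StExp A → A → StExp A → Prop
  | act {a : A} : Step (StExp.act a) a StExp.one
  | addL {e₁ e₂ e' : StExp A} {a : A} : Step e₁ a e' → Step (StExp.add e₁ e₂) a e'
  | addR {e₁ e₂ e' : StExp A} {a : A} : Step e₂ a e' → Step (StExp.add e₁ e₂) a e'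
  | mulL {e₁ e₂ e₁' : StExp A} {a : A} :
      Step e₁ a e₁' → Step (StExp.mul e₁ e₂) a (StExp.mul e₁' e₂)
  | mulR {e₁ e₂ e₂' : StExp A} {a : A} :
      Term e₁ → Step e₂ a e₂' → Step (StExp.mul e₁ e₂) a e₂'
  | star {e e' : StExp A} {a : A} :
      Step e a e' → Step (StExp.star e) a (StExp.mul e' (StExp.star e))

/-- (Syntactic) star height. -/
def height : StExp A → ℕ
  | .zero => 0
  | .one => 0
  | .act _ => 0
  | .add e₁ e₂ => max e₁.height e₂.height
  | .mul e₁ e₂ => max e₁.height e₂.height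
  | .star e => e.height + 1

end StExp

/-- Stacked star expressions: `E ::= e | E·e | E * e*`. -/
inductive SExp (A : Type u) : Type u
  | up : StExp A → SExp A
  | pr : SExp A → StExp A → SExp A
  | st : SExp A → StExp A → SExp A

namespace SExp

variable {A : Type u}

/-- Projection to star expressions, interpreting `*` as `·`. -/
def proj : SExp A → StExp A
  | .up e => e
  | .pr E e => StExp.mul E.proj e
  | .st E e => StExp.mul E.proj (StExp.star e)

/-- `E` is a star expression (contains no stacked product `*`). -/
def IsStExp : SExp A → Prop
  | .up _ => True
  | .pr E _ => IsStExp E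
  | .st _ _ => False

/-- Star expressions that are not products (canonical arguments of `up`). -/
def UpOk : StExp A → Prop
  | .mul _ _ => False
  | _ => True

/-- Canonical stacked star expressions: products of star expressions are
represented by `pr` rather than by `up` applied to `StExp.mul`. -/
def Canonical : SExp A → Prop
  | .up e => UpOk e
  | .pr E _ => Canonical E
  | .st E _ => Canonical E

/-- Canonical embedding of star expressions into stacked star expressions. -/
def flatUp : StExp A → SExp A
  | .mul e₁ e₂ => SExp.pr (flatUp e₁) e₂
  | e => SExp.up e

/-- Immediate termination for stacked star expressions (TSS `T̲^(*)(A)`). -/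
inductive STerm : SExp A → Prop
  | up {e : StExp A} : StExp.Term e → STerm (SExp.up e)
  | pr {E : SExp A} {e : StExp A} : STerm E → StExp.Term e → STerm (SExp.pr E e)

/-- Transitions of the TSS `T̲^(*)(A)`; labels in `Option A`, where `none`
is the empty-step label `1`. -/
inductive SStep : SExp A → Option A → SExp A → Prop
  | act {a : A} : SStep (SExp.up (StExp.act a)) (some a) (SExp.up StExp.one)
  | addL {e₁ e₂ : StExp A} {a : A} {E' : SExp A} :
      SStep (SExp.up e₁) (some a) E' → SStep (SExp.up (StExp.add e₁ e₂)) (some a) E'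
  | addR {e₁ e₂ : StExp A} {a : A} {E' : SExp A} :
      SStep (SExp.up e₂) (some a) E' → SStep (SExp.up (StExp.add e₁ e₂)) (some a) E'
  | upMulL {e₁ e₂ : StExp A} {l : Option A} {E₁' : SExp A} :
      SStep (SExp.up e₁) l E₁' → SStep (SExp.up (StExp.mul e₁ e₂)) l (SExp.pr E₁' e₂)
  | upMulR {e₁ e₂ : StExp A} {a : A} {E₂' : SExp A} :
      StExp.Term e₁ → SStep (SExp.up e₂) (some a) E₂' →
      SStep (SExp.up (StExp.mul e₁ e₂)) (some a) E₂'
  | upStar {e : StExp A} {a : A} {E' : SExp A} :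
      SStep (SExp.up e) (some a) E' →
      SStep (SExp.up (StExp.star e)) (some a) (SExp.st E' e)
  | prL {E₁ E₁' : SExp A} {e₂ : StExp A} {l : Option A} :
      SStep E₁ l E₁' → SStep (SExp.pr E₁ e₂) l (SExp.pr E₁' e₂)
  | prR {E₁ E₂' : SExp A} {e₂ : StExp A} {a : A} :
      STerm E₁ → SStep (SExp.up e₂) (some a) E₂' → SStep (SExp.pr E₁ e₂) (some a) E₂'
  | stL {E₁ E₁' : SExp A} {e₂ : StExp A} {l : Option A} :
      SStep E₁ l E₁' → SStep (SExp.st E₁ e₂) l (SExp.st E₁' e₂)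
  | stOne {E₁ : SExp A} {e₂ : StExp A} :
      STerm E₁ → SStep (SExp.st E₁ e₂) none (SExp.up (StExp.star e₂))

/-- `1`-transition. -/
def OneStep (E F : SExp A) : Prop := SStep E none F

/-- Transition with an arbitrary label in `A ∪ {1}`. -/
def AStep (E F : SExp A) : Prop := ∃ l, SStep E l F

/-- Induced (proper) transition `E ⇒a E'`: a sequence of `1`-transitions
followed by an `a`-transition. -/
def IStep (E : SExp A) (a : A) (E' : SExp A) : Prop :=
  ∃ F, Relation.ReflTransGen OneStep E F ∧ SStep F (some a) E'

/-- Induced termination `E ↓(1)`: a sequence of `1`-transitions ending in a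
terminating expression. -/
def ITerm (E : SExp A) : Prop :=
  ∃ F, Relation.ReflTransGen OneStep E F ∧ STerm F

/-- `E` is normed: a path to an expression with immediate termination. -/
def Normed (E : SExp A) : Prop :=
  ∃ F, Relation.ReflTransGen AStep E F ∧ STerm F

/-- `E` is normed⁺: a nonempty sequence of induced transitions to an
expression with induced termination. -/
def NormedP (E : SExp A) : Prop :=
  ∃ F, Relation.TransGen (fun X Y => ∃ a : A, IStep X a Y) E F ∧ ITerm F

/-- Induced termination as derived in the extension `T̲ind^(*)(A)`. -/
inductive IndTerm : SExp A → Prop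
  | base {E : SExp A} : STerm E → IndTerm E
  | step {E F : SExp A} : SStep E none F → IndTerm F → IndTerm E

/-- Induced transitions as derived in the extension `T̲ind^(*)(A)`. -/
inductive IndStep : SExp A → A → SExp A → Prop
  | base {E E' : SExp A} {a : A} : SStep E (some a) E' → IndStep E a E'
  | step {E F E' : SExp A} {a : A} : SStep E none F → IndStep F a E' → IndStep E a E'

/-- Marked transitions of the TSS `T̲̂^(*)(A)`: marking label `0` means a body
(`bo`) transition, `n ≥ 1` a loop-entry transition of level `n`. -/
inductive MStep : SExp A → Option A × ℕ → SExp A → Prop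
  | act {a : A} : MStep (SExp.up (StExp.act a)) (some a, 0) (SExp.up StExp.one)
  | addL {e₁ e₂ : StExp A} {a : A} {n : ℕ} {E' : SExp A} :
      MStep (SExp.up e₁) (some a, n) E' → MStep (SExp.up (StExp.add e₁ e₂)) (some a, 0) E'
  | addR {e₁ e₂ : StExp A} {a : A} {n : ℕ} {E' : SExp A} :
      MStep (SExp.up e₂) (some a, n) E' → MStep (SExp.up (StExp.add e₁ e₂)) (some a, 0) E'
  | upMulL {e₁ e₂ : StExp A} {l : Option A × ℕ} {E₁' : SExp A} :
      MStep (SExp.up e₁) l E₁' → MStep (SExp.up (StExp.mul e₁ e₂)) l (SExp.pr E₁' e₂)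
  | upMulR {e₁ e₂ : StExp A} {a : A} {n : ℕ} {E₂' : SExp A} :
      StExp.Term e₁ → MStep (SExp.up e₂) (some a, n) E₂' →
      MStep (SExp.up (StExp.mul e₁ e₂)) (some a, 0) E₂'
  | upStarP {e : StExp A} {a : A} {n : ℕ} {E' : SExp A} :
      NormedP (SExp.up e) → MStep (SExp.up e) (some a, n) E' →
      MStep (SExp.up (StExp.star e)) (some a, e.height + 1) (SExp.st E' e)
  | upStarN {e : StExp A} {a : A} {n : ℕ} {E' : SExp A} :
      ¬ NormedP (SExp.up e) → MStep (SExp.up e) (some a, n) E' →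
      MStep (SExp.up (StExp.star e)) (some a, 0) (SExp.st E' e)
  | prL {E₁ E₁' : SExp A} {e₂ : StExp A} {l : Option A × ℕ} :
      MStep E₁ l E₁' → MStep (SExp.pr E₁ e₂) l (SExp.pr E₁' e₂)
  | prR {E₁ E₂' : SExp A} {e₂ : StExp A} {a : A} {n : ℕ} :
      STerm E₁ → MStep (SExp.up e₂) (some a, n) E₂' →
      MStep (SExp.pr E₁ e₂) (some a, 0) E₂'
  | stL {E₁ E₁' : SExp A} {e₂ : StExp A} {l : Option A × ℕ} :
      MStep E₁ l E₁' → MStep (SExp.st E₁ e₂) l (SExp.st E₁' e₂)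
  | stOne {E₁ : SExp A} {e₂ : StExp A} :
      STerm E₁ → MStep (SExp.st E₁ e₂) (none, 0) (SExp.up (StExp.star e₂))

/-- Body transition `→bo`. -/
def BStep (E F : SExp A) : Prop := ∃ l : Option A, MStep E (l, 0) F

/-- Star height of stacked star expressions. -/
def heightS : SExp A → ℕ
  | .up e => e.height
  | .pr E e => max E.heightS e.height
  | .st E e => max E.heightS (e.height + 1)

end SExp

/-- Applicative contexts of stacked star expressions. -/
inductive AppCtx (A : Type u) : Type u
  | hole : AppCtx A
  | pr : AppCtx A → StExp A → AppCtx A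
  | st : AppCtx A → StExp A → AppCtx A

/-- Filling the hole of an applicative context. -/
def AppCtx.fill {A : Type u} : AppCtx A → SExp A → SExp A
  | .hole, E => E
  | .pr C e, E => SExp.pr (C.fill E) e
  | .st C e, E => SExp.st (C.fill E) e

/-- A labeled transition system with termination. -/
structure LTS (S : Type u) (L : Type v) where
  step : S → L → S → Prop
  term : S → Prop

/-- Bisimulation between two LTSs with termination. -/
def IsBisimulation {S₁ : Type u} {S₂ : Type v} {L : Type w}
    (M₁ : LTS S₁ L) (M₂ : LTS S₂ L) (B : S₁ → S₂ → Prop) : Prop :=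
  (∃ s₁ s₂, B s₁ s₂) ∧
  ∀ s₁ s₂, B s₁ s₂ →
    ((∀ a s₁', M₁.step s₁ a s₁' → ∃ s₂', M₂.step s₂ a s₂' ∧ B s₁' s₂') ∧
     (∀ a s₂', M₂.step s₂ a s₂' → ∃ s₁', M₁.step s₁ a s₁' ∧ B s₁' s₂') ∧
     (M₁.term s₁ ↔ M₂.term s₂))

/-- The star expressions LTS `L(StExp(A))`. -/
def stexpLTS (A : Type u) : LTS (StExp A) A := ⟨StExp.Step, StExp.Term⟩

/-- The induced LTS of the stacked star expressions 1-LTS `L1(StExp^(*)(A))`. -/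
def indSExpLTS (A : Type u) : LTS (SExp A) A := ⟨SExp.IStep, SExp.ITerm⟩

/-- A (rooted) chart. -/
structure Chart (V : Type u) (L : Type v) where
  verts : Set V
  start : V
  step : V → L → V → Prop
  term : V → Prop

/-- Bisimulation between two charts: a bisimulation between the underlying
LTSs that relates the start vertices. -/
def IsChartBisim {V₁ : Type u} {V₂ : Type v} {L : Type w}
    (C₁ : Chart V₁ L) (C₂ : Chart V₂ L) (B : V₁ → V₂ → Prop) : Prop :=
  (∀ x y, B x y → x ∈ C₁.verts ∧ y ∈ C₂.verts) ∧
  B C₁.start C₂.start ∧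
  ∀ x y, B x y →
    ((∀ a x', C₁.step x a x' → ∃ y', C₂.step y a y' ∧ B x' y') ∧
     (∀ a y', C₂.step y a y' → ∃ x', C₁.step x a x' ∧ B x' y') ∧
     (C₁.term x ↔ C₂.term y))

def ChartBisimilar {V₁ : Type u} {V₂ : Type v} {L : Type w}
    (C₁ : Chart V₁ L) (C₂ : Chart V₂ L) : Prop :=
  ∃ B, IsChartBisim C₁ C₂ B

/-- Star expressions reachable from `e` in Milner's LTS. -/
def MReach {A : Type u} (e : StExp A) : Set (StExp A) :=
  {f | Relation.ReflTransGen (fun x y => ∃ a, StExp.Step x a y) e f}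

/-- The chart interpretation `C(e)` of a star expression. -/
def chartInt {A : Type u} (e : StExp A) : Chart (StExp A) A where
  verts := MReach e
  start := e
  step x a y := x ∈ MReach e ∧ StExp.Step x a y
  term x := x ∈ MReach e ∧ StExp.Term x

/-- Stacked star expressions reachable from (the canonical representation of)
`e` in the 1-LTS. -/
def SReach {A : Type u} (e : StExp A) : Set (SExp A) :=
  {F | Relation.ReflTransGen SExp.AStep (SExp.flatUp e) F}

/-- The 1-chart interpretation `C1(e)` of a star expression. -/
def oneChartInt {A : Type u} (e : StExp A) : Chart (SExp A) (Option A) where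
  verts := SReach e
  start := SExp.flatUp e
  step x l y := x ∈ SReach e ∧ SExp.SStep x l y
  term x := x ∈ SReach e ∧ SExp.STerm x

/-- The entry/body-labeled 1-chart interpretation `Ĉ1(e)`. -/
def markedOneChartInt {A : Type u} (e : StExp A) : Chart (SExp A) (Option A × ℕ) where
  verts := SReach e
  start := SExp.flatUp e
  step x l y := x ∈ SReach e ∧ SExp.MStep x l y
  term x := x ∈ SReach e ∧ SExp.STerm x

/-- The induced chart of a 1-chart: induced transitions and induced
termination. -/
def indChart {V : Type u} {A : Type v} (C : Chart V (Option A)) : Chart V A where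
  verts := C.verts
  start := C.start
  step x a y := ∃ u, Relation.ReflTransGen (fun s t => C.step s none t) x u ∧ C.step u (some a) y
  term x := ∃ u, Relation.ReflTransGen (fun s t => C.step s none t) x u ∧ C.term u

/-- An infinite path from the start vertex of a chart. -/
def IsInfPathFrom {V : Type u} {L : Type v} (C : Chart V L) (p : ℕ → V) : Prop :=
  p 0 = C.start ∧ ∀ i, ∃ l, C.step (p i) l (p (i + 1))

/-- Loop chart: (L1) an infinite path from the start vertex exists, (L2) every
infinite path from the start vertex returns to it after a positive number of
transitions, (L3) only the start vertex may terminate. -/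
def IsLoopChart {V : Type u} {L : Type v} (C : Chart V L) : Prop :=
  (∃ p, IsInfPathFrom C p) ∧
  (∀ p, IsInfPathFrom C p → ∃ k, 0 < k ∧ p k = C.start) ∧
  (∀ w ∈ C.verts, C.term w → w = C.start)

namespace LLEE

variable {S : Type u} {L : Type v}

/-- Body transition of an entry/body-labeling. -/
def Body (step : S → L × ℕ → S → Prop) (x y : S) : Prop := ∃ l, step x (l, 0) y

/-- Entry transition of level `n` of an entry/body-labeling. -/
def Entry (step : S → L × ℕ → S → Prop) (n : ℕ) (x y : S) : Prop := ∃ l, step x (l, n) y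

/-- Vertices of the induced subchart at `(v, n)`: on paths that start with an
`→[n]` transition from `v`, continue with body transitions, and halt upon
revisiting `v`. -/
def loopVerts (step : S → L × ℕ → S → Prop) (v : S) (n : ℕ) : Set S :=
  insert v {w | ∃ u, Entry step n v u ∧
    Relation.ReflTransGen (fun x y => Body step x y ∧ x ≠ v) u w}

/-- The induced subchart at `(v, n)`. -/
def subchartAt (step : S → L × ℕ → S → Prop) (term : S → Prop) (v : S) (n : ℕ) :
    Chart S (L × ℕ) where
  verts := loopVerts step v n
  start := v
  step x l y :=
    (x = v ∧ l.2 = n ∧ step x l y) ∨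
    (x ∈ loopVerts step v n ∧ x ≠ v ∧ l.2 = 0 ∧ step x l y)
  term x := x ∈ loopVerts step v n ∧ term x

/-- LLEE-witness conditions (W1)–(W3) for an entry/body-labeled transition
system with transitions `step` and termination `term`. -/
def IsWitness (step : S → L × ℕ → S → Prop) (term : S → Prop) : Prop :=
  (¬ ∃ p : ℕ → S, ∀ i, Body step (p i) (p (i + 1))) ∧
  (∀ v n, 0 < n → (∃ w, Entry step n v w) → IsLoopChart (subchartAt step term v n)) ∧
  (∀ v n, 0 < n → (∃ w, Entry step n v w) →
    ∀ t, t ∈ loopVerts step v n → t ≠ v → ∀ m t', 0 < m → Entry step m t t' → m < n)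

end LLEE

namespace LEE

variable {V : Type u} {L : Type v}

/-- Vertices of the subchart generated from `v` by a set `U` of transitions
from `v`: paths start with a transition in `U` and continue (with arbitrary
transitions) until `v` is reached again. -/
def genVerts (C : Chart V L) (v : V) (U : Set (V × L × V)) : Set V :=
  insert v {w | ∃ u, (∃ l, (v, l, u) ∈ U) ∧
    Relation.ReflTransGen (fun x y => (∃ l, C.step x l y) ∧ x ≠ v) u w}

/-- The subchart generated from `v` by the transitions in `U`. -/
def genSubchart (C : Chart V L) (v : V) (U : Set (V × L × V)) : Chart V L where
  verts := genVerts C v U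
  start := v
  step x l y :=
    (x = v ∧ (v, l, y) ∈ U) ∨
    (x ∈ genVerts C v U ∧ x ≠ v ∧ C.step x l y)
  term x := x ∈ genVerts C v U ∧ C.term x

/-- `U` determines a loop subchart of `C` rooted at `v`. -/
def IsLoopSubchart (C : Chart V L) (v : V) (U : Set (V × L × V)) : Prop :=
  v ∈ C.verts ∧ U.Nonempty ∧
  (∀ t ∈ U, t.1 = v ∧ C.step t.1 t.2.1 t.2.2) ∧
  IsLoopChart (genSubchart C v U)

/-- Elimination of the loop-entry transitions in `U`, followed by removal of
all vertices and transitions that become unreachable. -/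
def elim (C : Chart V L) (U : Set (V × L × V)) : Chart V L :=
  let step' : V → L → V → Prop := fun x l y => C.step x l y ∧ (x, l, y) ∉ U
  let R : Set V := {w | Relation.ReflTransGen (fun x y => ∃ l, step' x l y) C.start w}
  { verts := C.verts ∩ R
    start := C.start
    step := fun x l y => step' x l y ∧ x ∈ R ∧ y ∈ R
    term := fun x => C.term x ∧ x ∈ R }

/-- One step of the loop elimination procedure. -/
def ElimStep (C C' : Chart V L) : Prop :=
  ∃ v U, IsLoopSubchart C v U ∧ C' = elim C U

/-- The chart has an infinite path. -/
def HasInfPath (C : Chart V L) : Prop :=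
  ∃ p : ℕ → V, p 0 ∈ C.verts ∧ ∀ i, ∃ l, C.step (p i) l (p (i + 1))

/-- The loop existence and elimination property LEE: repeated elimination of
loop subcharts results in a chart without an infinite path. -/
def SatisfiesLEE (C : Chart V L) : Prop :=
  ∃ C', Relation.ReflTransGen ElimStep C C' ∧ ¬ HasInfPath C'

end LEE

/-- A maximal path of body transitions from `X` in the entry/body-labeled
1-LTS: finite (of length `len`) or infinite (`len = ⊤`), and if finite then
not extensible by any further body transition. -/
structure BoPath (A : Type u) (X : SExp A) where
  len : ℕ∞
  f : ℕ → SExp A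
  head : f 0 = X
  steps : ∀ i : ℕ, (i : ℕ∞) < len → SExp.BStep (f i) (f (i + 1))
  maximal : ∀ n : ℕ, len = (n : ℕ∞) → ∀ Y, ¬ SExp.BStep (f n) Y

/-- Canonical stacked star expressions (the states of the stacked star
expressions 1-LTS `L1(StExp^(*)(A))`). -/
def CSExp (A : Type u) : Type u := {E : SExp A // SExp.Canonical E}

/-!
Weigh a star expression by its number of action and star occurrences, and a stacked
star expression by the weights of its factors, with a bare `e*` weighing nothing. Every
body transition lowers the weight, except one that enters a *locked frame* `X * f*` whose
body `X` is not normed: then `f` is not normed⁺, so the loop-entry mark was withheld.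
Such a frame is never left again, and since `X` stems from a transition of `f` its star
height is smaller than that of the whole expression. Body transitions from there on are
body transitions of `X`, so well-foundedness follows by induction on star height with an
inner induction on the weight.
-/

namespace StExp

variable {A : Type u}

def weight : StExp A → ℕ
  | .zero => 0
  | .one => 0
  | .act _ => 1
  | .add e₁ e₂ => e₁.weight + e₂.weight
  | .mul e₁ e₂ => e₁.weight + e₂.weight
  | .star e => e.weight + 1

end StExp

namespace SExp

variable {A : Type u}

/-- A bare `e*` weighs `0`, so that the body transition `E * e* →1 e*` lowers the weight. -/
def weight : SExp A → ℕ
  | .up (.star _) => 0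
  | .up e => e.weight
  | .pr E e => E.weight + e.weight
  | .st E _ => E.weight + 1

theorem MStep.sStep {E F : SExp A} {l : Option A × ℕ} (h : MStep E l F) : SStep E l.1 F := by
  induction h with
  | act => exact .act
  | addL _ ih => exact .addL ih
  | addR _ ih => exact .addR ih
  | upMulL _ ih => exact .upMulL ih
  | upMulR h₁ _ ih => exact .upMulR h₁ ih
  | upStarP _ _ ih => exact .upStar ih
  | upStarN _ _ ih => exact .upStar ih
  | prL _ ih => exact .prL ih
  | prR h₁ _ ih => exact .prR h₁ ih
  | stL _ ih => exact .stL ih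
  | stOne h₁ => exact .stOne h₁

theorem SStep.heightS_le {E F : SExp A} {l : Option A} (h : SStep E l F) :
    F.heightS ≤ E.heightS := by
  induction h <;> simp only [heightS, StExp.height] at * <;> omega

theorem BStep.heightS_le {E F : SExp A} (h : BStep E F) : F.heightS ≤ E.heightS :=
  let ⟨_, h⟩ := h; h.sStep.heightS_le

theorem STerm.normed {E : SExp A} (h : STerm E) : Normed E := ⟨E, .refl, h⟩

theorem Normed.of_sStep {E F : SExp A} {l : Option A} (h : SStep E l F) (hF : Normed F) :
    Normed E :=
  let ⟨G, hFG, hG⟩ := hF; ⟨G, .head ⟨l, h⟩ hFG, hG⟩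

theorem Normed.exists_iStep_path_iTerm {E : SExp A} (h : Normed E) :
    ∃ Y, Relation.ReflTransGen (fun X Y => ∃ a : A, IStep X a Y) E Y ∧ ITerm Y := by
  obtain ⟨F, hEF, hF⟩ := h
  induction hEF using Relation.ReflTransGen.head_induction_on with
  | refl => exact ⟨F, .refl, F, .refl, hF⟩
  | head hstep _ ih =>
    obtain ⟨Y, hpath, hY⟩ := ih
    obtain ⟨l | a, hstep⟩ := hstep
    · -- a `1`-transition is absorbed into the first induced transition or the termination
      rcases hpath.cases_head with rfl | ⟨Z, ⟨a, G, hG, hGZ⟩, hZY⟩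
      · obtain ⟨G, hG, hGt⟩ := hY
        exact ⟨_, .refl, G, .head hstep hG, hGt⟩
      · exact ⟨Y, .head ⟨a, G, .head hstep hG, hGZ⟩ hZY, hY⟩
    · exact ⟨Y, .head ⟨a, _, .refl, hstep⟩ hpath, hY⟩

theorem normedP_of_sStep_of_normed {E F : SExp A} {a : A} (h : SStep E (some a) F)
    (hF : Normed F) : NormedP E :=
  let ⟨Y, hFY, hY⟩ := hF.exists_iStep_path_iTerm
  ⟨Y, .head' ⟨a, E, .refl, h⟩ hFY, hY⟩

/-- A frame `X * f*` whose body `X` can never terminate, so that no transition leaves it. -/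
def HasLockedFrame (F : SExp A) : Prop :=
  ∃ (C : AppCtx A) (X : SExp A) (f : StExp A),
    F = C.fill (.st X f) ∧ ¬ Normed X ∧ X.heightS ≤ f.height

theorem HasLockedFrame.pr {E : SExp A} (h : HasLockedFrame E) (e : StExp A) :
    HasLockedFrame (.pr E e) :=
  let ⟨C, X, f, hE, hX, hXf⟩ := h; ⟨.pr C e, X, f, hE ▸ rfl, hX, hXf⟩

theorem HasLockedFrame.st {E : SExp A} (h : HasLockedFrame E) (e : StExp A) :
    HasLockedFrame (.st E e) :=
  let ⟨C, X, f, hE, hX, hXf⟩ := h; ⟨.st C e, X, f, hE ▸ rfl, hX, hXf⟩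

theorem hasLockedFrame_st_of_not_normedP {f : StExp A} {a : A} {E : SExp A}
    (hf : ¬ NormedP (up f)) (h : SStep (up f) (some a) E) : HasLockedFrame (.st E f) :=
  ⟨.hole, E, f, rfl, fun hE => hf (normedP_of_sStep_of_normed h hE), h.heightS_le⟩

theorem MStep.hasLockedFrame_or_weight_lt_of_up {e : StExp A} {l : Option A × ℕ} {F : SExp A}
    (h : MStep (up e) l F) : HasLockedFrame F ∨ F.weight < e.weight := by
  generalize hE : up e = E at h
  induction h generalizing e <;> cases hE
  case act => exact .inr (by simp [weight, StExp.weight])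
  case addL ih => exact (ih rfl).imp_right fun h => by simp only [StExp.weight]; omega
  case addR ih => exact (ih rfl).imp_right fun h => by simp only [StExp.weight]; omega
  case upMulL ih =>
    exact (ih rfl).imp (·.pr _) fun h => by simp only [weight, StExp.weight]; omega
  case upMulR ih => exact (ih rfl).imp_right fun h => by simp only [StExp.weight]; omega
  case upStarP ih =>
    exact (ih rfl).imp (·.st _) fun h => by simp only [weight, StExp.weight]; omega
  case upStarN hf h _ => exact .inl (hasLockedFrame_st_of_not_normedP hf h.sStep)

theorem MStep.hasLockedFrame_or_weight_lt {E F : SExp A} {L : Option A × ℕ} (h : MStep E L F)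
    (hL : L.2 = 0) : HasLockedFrame F ∨ F.weight < E.weight := by
  induction h with
  | act => exact .inr (by simp [weight, StExp.weight])
  | addL h =>
    exact h.hasLockedFrame_or_weight_lt_of_up.imp_right fun h => by
      simp only [weight, StExp.weight]; omega
  | addR h =>
    exact h.hasLockedFrame_or_weight_lt_of_up.imp_right fun h => by
      simp only [weight, StExp.weight]; omega
  | upMulL h =>
    exact h.upMulL.hasLockedFrame_or_weight_lt_of_up.imp_right fun h => by
      simpa only [weight] using h
  | upMulR _ h =>
    exact h.hasLockedFrame_or_weight_lt_of_up.imp_right fun h => by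
      simp only [weight, StExp.weight]; omega
  | upStarP => simp at hL
  | upStarN hf h => exact .inl (hasLockedFrame_st_of_not_normedP hf h.sStep)
  | prL _ ih => exact (ih hL).imp (·.pr _) fun h => by simp only [weight]; omega
  | prR _ h =>
    exact h.hasLockedFrame_or_weight_lt_of_up.imp_right fun h => by simp only [weight]; omega
  | stL _ ih => exact (ih hL).imp (·.st _) fun h => by simp only [weight]; omega
  | stOne => exact .inr (by simp [weight])

theorem BStep.hasLockedFrame_or_weight_lt {E F : SExp A} (h : BStep E F) :
    HasLockedFrame F ∨ F.weight < E.weight :=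
  let ⟨_, h⟩ := h; h.hasLockedFrame_or_weight_lt rfl

theorem not_sTerm_fill_st (C : AppCtx A) (X : SExp A) (f : StExp A) :
    ¬ STerm (C.fill (.st X f)) := by
  induction C with
  | hole => rintro ⟨⟩
  | pr C g ih => rintro ⟨⟩; exact ih ‹_›
  | st C g ih => rintro ⟨⟩

theorem heightS_le_heightS_fill (C : AppCtx A) (E : SExp A) : E.heightS ≤ (C.fill E).heightS := by
  induction C with
  | hole => exact le_rfl
  | pr C g ih => exact ih.trans (le_max_left _ _)
  | st C g ih => exact ih.trans (le_max_left _ _)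

theorem MStep.of_fill_st {C : AppCtx A} {X : SExp A} {f : StExp A} {l : Option A × ℕ}
    {G : SExp A} (h : MStep (C.fill (.st X f)) l G) :
    STerm X ∨ ∃ X', MStep X l X' ∧ G = C.fill (.st X' f) := by
  induction C generalizing l G with
  | hole =>
    cases h with
    | stL h => exact .inr ⟨_, h, rfl⟩
    | stOne hX => exact .inl hX
  | pr C g ih =>
    cases h with
    | prL h => exact (ih h).imp_right fun ⟨X', hX', hG⟩ => ⟨X', hX', hG ▸ rfl⟩
    | prR hC _ => exact absurd hC (not_sTerm_fill_st C X f)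
  | st C g ih =>
    cases h with
    | stL h => exact (ih h).imp_right fun ⟨X', hX', hG⟩ => ⟨X', hX', hG ▸ rfl⟩
    | stOne hC => exact absurd hC (not_sTerm_fill_st C X f)

theorem acc_fill_st_of_not_normed (C : AppCtx A) (f : StExp A) {X : SExp A}
    (hacc : Acc (Function.swap BStep) X) (hX : ¬ Normed X) :
    Acc (Function.swap BStep) (C.fill (.st X f)) := by
  induction hacc with
  | intro X _ ih =>
  refine ⟨_, fun G ⟨l, hG⟩ => ?_⟩
  rcases hG.of_fill_st with hterm | ⟨X', hX', rfl⟩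
  · exact absurd hterm.normed hX
  · exact ih X' ⟨l, hX'⟩ fun hn => hX (hn.of_sStep hX'.sStep)

theorem acc_bStep_of_heightS_le (n : ℕ) :
    ∀ E : SExp A, E.heightS ≤ n → Acc (Function.swap BStep) E := by
  induction n using Nat.strong_induction_on with
  | _ n ihHeight =>
  intro E
  induction E using (measure weight).wf.induction with
  | _ E ihWeight =>
  intro hE
  refine ⟨_, fun F hF => ?_⟩
  have hFn := hF.heightS_le.trans hE
  rcases hF.hasLockedFrame_or_weight_lt with ⟨C, X, f, rfl, hX, hXf⟩ | hlt
  · have hfn : f.height + 1 ≤ n :=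
      (le_max_right _ _).trans ((heightS_le_heightS_fill C _).trans hFn)
    exact acc_fill_st_of_not_normed C f (ihHeight _ (by omega) X le_rfl) hX
  · exact ihWeight F hlt hFn

theorem wellFounded_swap_bStep : WellFounded (Function.swap (BStep (A := A))) :=
  ⟨fun E => acc_bStep_of_heightS_le _ E le_rfl⟩

end SExp

/-- There is no infinite path of body transitions in the
entry/body-labeled 1-LTS `L̂1(StExp^(*)(A))`. -/
theorem no_infinite_body_path (A : Type u) :
    ¬ ∃ p : ℕ → SExp A, ∀ i, SExp.BStep (p i) (p (i + 1)) := by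
  rintro ⟨p, hp⟩
  exact (wellFounded_iff_isEmpty_descending_chain.1 SExp.wellFounded_swap_bStep).elim ⟨p, hp⟩
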